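/- Let ℓ₁ > 0 and let G be a probability measure on [0, ℓ₁] with p₁ := G({ℓ₁}) > 0. Let ψ, Ψ : [0, ∞) × [0, ℓ₁] → ℝ be measurable with 0 ≤ ψ(u, ℓ) ≤ Ψ(u, ℓ) ≤ 1 for all u, ℓ. Let c₁ > 0, R₁ > 0 and C > 0 be constants. Assume: (i) Ψ(u, ℓ₁)/(c₁ e^{−R₁ u}) → 1 as u → ∞; (ii) ψ(u, ℓ₁)/Ψ(u, ℓ₁) → C as u → ∞; (iii) there is a function R : [0, ℓ₁) → ℝ with R(ℓ) > R₁ for every ℓ ∈ [0, ℓ₁) and Ψ(u, ℓ) ≤ e^{−R(ℓ) u} for all u ≥ 0 and ℓ ∈ [0, ℓ₁). Then, as u → ∞, ∫_{[0,ℓ₁]} ψ(u, ℓ) dG(ℓ) ∼ p₁ · C · c₁ · e^{−R₁ u} and ∫_{[0,ℓ₁]} Ψ(u, ℓ) dG(ℓ) ∼ p₁ · c₁ · e^{−R₁ u}; in particular the ratio of the two integrals tends to C. -/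

import Mathlib

/-!
Split each integral into the atom `p₁ φ(u, ℓ₁)` and the integral over `[0, ℓ₁)`. There the
Lundberg bounds give `e^{R₁u} Ψ(u, ℓ) ≤ e^{-(R(ℓ) - R₁)u}`, which is at most `1` and tends to `0`,
so by dominated convergence the remainder is `o(e^{-R₁u})` and the atom alone dictates the
asymptotics: `Ψ(u, ℓ₁) ∼ c₁ e^{-R₁u}` and `ψ(u, ℓ₁) ∼ C Ψ(u, ℓ₁)`.
-/

open MeasureTheory Filter Real Set

open Asymptotics Topology

theorem Asymptotics.IsEquivalent.const_mul {α β : Type*} [NormedField β] {u v : α → β}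
    {l : Filter α} (c : β) (h : u ~[l] v) : (fun x => c * u x) ~[l] fun x => c * v x :=
  IsEquivalent.refl.mul h

theorem Asymptotics.isEquivalent_const_mul_of_tendsto_div {α β : Type*} [NormedField β]
    {u v : α → β} {l : Filter α} {c : β} (hc : c ≠ 0)
    (h : Tendsto (fun x => u x / v x) l (𝓝 c)) : u ~[l] fun x => c * v x := by
  have h' := h.div_const c
  rw [div_self hc] at h'
  exact isEquivalent_of_tendsto_one (h'.congr fun x => (div_mul_eq_div_div_swap _ _ _).symm)

theorem Real.norm_div_exp_le_of_norm_le_exp {y R r u : ℝ} (hy : ‖y‖ ≤ exp (-R * u)) :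
    ‖y / exp (-r * u)‖ ≤ exp (-((R - r) * u)) := by
  rw [norm_div, norm_of_nonneg (exp_pos _).le, div_le_iff₀ (exp_pos _), ← exp_add]
  rwa [show -((R - r) * u) + -r * u = -R * u by ring]

namespace MeasureTheory

theorem integral_eq_measureReal_singleton_mul_add_compl {α : Type*} [MeasurableSpace α]
    [MeasurableSingletonClass α] {μ : Measure α} {f : α → ℝ} (hf : Integrable f μ) (a : α) :
    ∫ x, f x ∂μ = μ.real {a} * f a + ∫ x in {a}ᶜ, f x ∂μ := by
  rw [← integral_add_compl (measurableSet_singleton a) hf, integral_singleton, smul_eq_mul]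

theorem isLittleO_integral_of_norm_le_exp {α : Type*} [MeasurableSpace α] {μ : Measure α}
    [IsFiniteMeasure μ] {F : ℝ → α → ℝ} {R : α → ℝ} {r : ℝ}
    (hF : ∀ᶠ u in atTop, AEStronglyMeasurable (F u) μ)
    (hbound : ∀ᵐ x ∂μ, r < R x ∧ ∀ u, 0 ≤ u → ‖F u x‖ ≤ exp (-R x * u)) :
    (fun u => ∫ x, F u x ∂μ) =o[atTop] fun u => exp (-r * u) := by
  refine (isLittleO_iff_tendsto' (.of_forall fun u h => absurd h (exp_ne_zero _))).2 ?_
  simp_rw [← integral_div]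
  have hlim := tendsto_integral_filter_of_dominated_convergence (fun _ => (1 : ℝ))
    (F := fun u x => F u x / exp (-r * u)) (f := fun _ => 0)
    (hF.mono fun u h => h.mul_const _) ?_ (integrable_const 1) ?_
  · simpa using hlim
  · filter_upwards [eventually_ge_atTop 0] with u hu
    filter_upwards [hbound] with x ⟨hr, hx⟩
    refine (norm_div_exp_le_of_norm_le_exp (hx u hu)).trans (exp_le_one_iff.2 ?_)
    exact neg_nonpos.2 (mul_nonneg (sub_nonneg.2 hr.le) hu)
  · filter_upwards [hbound] with x ⟨hr, hx⟩
    refine squeeze_zero_norm' ?_ (tendsto_exp_neg_atTop_nhds_zero.comp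
      (tendsto_id.const_mul_atTop (sub_pos.2 hr)))
    filter_upwards [eventually_ge_atTop 0] with u hu
    exact norm_div_exp_le_of_norm_le_exp (hx u hu)

theorem ae_restrict_compl_singleton_mem_Ico {μ : Measure ℝ} {a b : ℝ}
    (hμ : μ (Icc a b)ᶜ = 0) : ∀ᵐ x ∂μ.restrict {b}ᶜ, x ∈ Ico a b := by
  filter_upwards [ae_restrict_of_ae (measure_eq_zero_iff_ae_notMem.1 hμ),
    ae_restrict_mem (measurableSet_singleton b).compl] with x hx hne
  rw [notMem_compl_iff] at hx
  exact ⟨hx.1, lt_of_le_of_ne hx.2 hne⟩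

theorem integral_isEquivalent_of_atom {α : Type*} [MeasurableSpace α]
    [MeasurableSingletonClass α] {μ : Measure α} [IsFiniteMeasure μ] {a : α}
    {F : ℝ → α → ℝ} {R : α → ℝ} {r : ℝ} {g : ℝ → ℝ} (ha : μ.real {a} ≠ 0)
    (hF : ∀ᶠ u in atTop, Integrable (F u) μ)
    (hbound : ∀ᵐ x ∂μ.restrict {a}ᶜ, r < R x ∧ ∀ u, 0 ≤ u → ‖F u x‖ ≤ exp (-R x * u))
    (hatom : (fun u => F u a) ~[atTop] g) (hg : (fun u => exp (-r * u)) =O[atTop] g) :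
    (fun u => ∫ x, F u x ∂μ) ~[atTop] fun u => μ.real {a} * g u := by
  have hrem := isLittleO_integral_of_norm_le_exp
    (hF.mono fun u h => h.restrict.aestronglyMeasurable) hbound
  refine ((hatom.const_mul _).add_isLittleO
    (hrem.trans_isBigO (hg.trans (isBigO_self_const_mul ha g atTop)))).congr_left ?_
  filter_upwards [hF] with u hu
  exact (integral_eq_measureReal_singleton_mul_add_compl hu a).symm

theorem integral_isEquivalent_of_le_of_atom_endpoint {μ : Measure ℝ} [IsFiniteMeasure μ]
    {a b r : ℝ} {φ Ψ : ℝ → ℝ → ℝ} {R g : ℝ → ℝ} (hμ : μ (Icc a b)ᶜ = 0) (hb : μ.real {b} ≠ 0)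
    (hmeas : ∀ u, 0 ≤ u → Measurable (φ u))
    (hφ : ∀ u, 0 ≤ u → ∀ x ∈ Icc a b, 0 ≤ φ u x ∧ φ u x ≤ Ψ u x ∧ Ψ u x ≤ 1)
    (hR : ∀ x ∈ Ico a b, r < R x) (hΨ : ∀ u, 0 ≤ u → ∀ x ∈ Ico a b, Ψ u x ≤ exp (-R x * u))
    (hatom : (fun u => φ u b) ~[atTop] g) (hg : (fun u => exp (-r * u)) =O[atTop] g) :
    (fun u => ∫ x, φ u x ∂μ) ~[atTop] fun u => μ.real {b} * g u := by
  have hsupp : ∀ᵐ x ∂μ, x ∈ Icc a b :=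
    (measure_eq_zero_iff_ae_notMem.1 hμ).mono fun _ => notMem_compl_iff.1
  refine integral_isEquivalent_of_atom (R := R) hb ?_ ?_ hatom hg
  · filter_upwards [eventually_ge_atTop 0] with u hu
    refine .of_bound (hmeas u hu).aestronglyMeasurable 1 ?_
    filter_upwards [hsupp] with x hx
    obtain ⟨h0, hφΨ, hΨ1⟩ := hφ u hu x hx
    rw [norm_of_nonneg h0]
    exact hφΨ.trans hΨ1
  · filter_upwards [ae_restrict_compl_singleton_mem_Ico hμ] with x hx
    refine ⟨hR x hx, fun u hu => ?_⟩
    obtain ⟨h0, hφΨ, -⟩ := hφ u hu x (Ico_subset_Icc_self hx)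
    rw [norm_of_nonneg h0]
    exact hφΨ.trans (hΨ u hu x hx)

end MeasureTheory

theorem endpoint_atom_asymptotics_general
    (ℓ₁ : ℝ)
    (G : Measure ℝ) [IsProbabilityMeasure G] (hGsupp : G (Set.Icc 0 ℓ₁)ᶜ = 0)
    (p₁ : ℝ) (hp₁def : p₁ = (G {ℓ₁}).toReal) (hp₁pos : 0 < p₁)
    (ψ Ψ : ℝ → ℝ → ℝ)
    (hψmeas : ∀ u, 0 ≤ u → Measurable (ψ u)) (hΨmeas : ∀ u, 0 ≤ u → Measurable (Ψ u))
    (horder : ∀ u, 0 ≤ u → ∀ ℓ ∈ Set.Icc 0 ℓ₁,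
      0 ≤ ψ u ℓ ∧ ψ u ℓ ≤ Ψ u ℓ ∧ Ψ u ℓ ≤ 1)
    (c₁ R₁ C : ℝ) (hc₁ : 0 < c₁) (hC : 0 < C)
    (hΨ_asymp : Tendsto (fun u => Ψ u ℓ₁ / (c₁ * Real.exp (-R₁ * u))) atTop (nhds 1))
    (hratio : Tendsto (fun u => ψ u ℓ₁ / Ψ u ℓ₁) atTop (nhds C))
    (R : ℝ → ℝ) (hR : ∀ ℓ ∈ Set.Ico 0 ℓ₁, R₁ < R ℓ)
    (hLundberg : ∀ u, 0 ≤ u → ∀ ℓ ∈ Set.Ico 0 ℓ₁, Ψ u ℓ ≤ Real.exp (-(R ℓ) * u)) :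
    Tendsto (fun u => (∫ ℓ, ψ u ℓ ∂G) / (p₁ * C * c₁ * Real.exp (-R₁ * u))) atTop (nhds 1) ∧
    Tendsto (fun u => (∫ ℓ, Ψ u ℓ ∂G) / (p₁ * c₁ * Real.exp (-R₁ * u))) atTop (nhds 1) ∧
    Tendsto (fun u => (∫ ℓ, ψ u ℓ ∂G) / (∫ ℓ, Ψ u ℓ ∂G)) atTop (nhds C) := by
  have hp₁ : G.real {ℓ₁} = p₁ := hp₁def.symm
  have hexp : (fun u => exp (-R₁ * u)) =O[atTop] fun u => c₁ * exp (-R₁ * u) :=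
    isBigO_self_const_mul hc₁.ne' _ _
  have hΨ₁ : (fun u => Ψ u ℓ₁) ~[atTop] fun u => c₁ * exp (-R₁ * u) :=
    isEquivalent_of_tendsto_one hΨ_asymp
  have hψ₁ : (fun u => ψ u ℓ₁) ~[atTop] fun u => C * (c₁ * exp (-R₁ * u)) :=
    (isEquivalent_const_mul_of_tendsto_div hC.ne' hratio).trans (hΨ₁.const_mul C)
  have hψ : (fun u => ∫ ℓ, ψ u ℓ ∂G) ~[atTop] fun u => p₁ * C * c₁ * exp (-R₁ * u) := by
    simpa only [hp₁, mul_assoc] using integral_isEquivalent_of_le_of_atom_endpoint hGsupp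
      (hp₁ ▸ hp₁pos.ne') hψmeas horder hR hLundberg hψ₁
      (hexp.trans (isBigO_self_const_mul hC.ne' _ _))
  have hΨ : (fun u => ∫ ℓ, Ψ u ℓ ∂G) ~[atTop] fun u => p₁ * c₁ * exp (-R₁ * u) := by
    simpa only [hp₁, mul_assoc] using integral_isEquivalent_of_le_of_atom_endpoint hGsupp
      (hp₁ ▸ hp₁pos.ne') hΨmeas
      (fun u hu ℓ hℓ => have h := horder u hu ℓ hℓ; ⟨h.1.trans h.2.1, le_rfl, h.2.2⟩)
      hR hLundberg hΨ₁ hexp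
  refine ⟨(isEquivalent_iff_tendsto_one (.of_forall fun u => by positivity)).1 hψ,
    (isEquivalent_iff_tendsto_one (.of_forall fun u => by positivity)).1 hΨ, ?_⟩
  refine (hψ.div hΨ).symm.tendsto_nhds (tendsto_const_nhds.congr fun u => ?_)
  rw [Pi.div_apply]
  field_simp

/-- Endpoint-atom case (Theorem 3): if the mixing measure `G` on `[0, ℓ₁]` has an atom of mass
`p₁ > 0` at the endpoint `ℓ₁`, the classical ruin probability at `ℓ₁` satisfies
`Ψ(u,ℓ₁) ∼ c₁ e^{−R₁u}`, the modified-to-classical ratio at `ℓ₁` tends to `C`, and intensities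
below `ℓ₁` obey a Lundberg bound with strictly larger adjustment coefficient, then
`∫ψ(u,ℓ)dG ∼ p₁·C·c₁·e^{−R₁u}`, `∫Ψ(u,ℓ)dG ∼ p₁·c₁·e^{−R₁u}`, and the ratio of the two
integrals tends to `C`. -/
theorem endpoint_atom_asymptotics
    (ℓ₁ : ℝ) (hℓ₁ : 0 < ℓ₁)
    (G : Measure ℝ) [IsProbabilityMeasure G] (hGsupp : G (Set.Icc 0 ℓ₁)ᶜ = 0)
    (p₁ : ℝ) (hp₁def : p₁ = (G {ℓ₁}).toReal) (hp₁pos : 0 < p₁)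
    (ψ Ψ : ℝ → ℝ → ℝ)
    (hψmeas : ∀ u, 0 ≤ u → Measurable (ψ u)) (hΨmeas : ∀ u, 0 ≤ u → Measurable (Ψ u))
    (horder : ∀ u, 0 ≤ u → ∀ ℓ ∈ Set.Icc 0 ℓ₁,
      0 ≤ ψ u ℓ ∧ ψ u ℓ ≤ Ψ u ℓ ∧ Ψ u ℓ ≤ 1)
    (c₁ R₁ C : ℝ) (hc₁ : 0 < c₁) (hR₁ : 0 < R₁) (hC : 0 < C)
    (hΨ_asymp : Tendsto (fun u => Ψ u ℓ₁ / (c₁ * Real.exp (-R₁ * u))) atTop (nhds 1))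
    (hratio : Tendsto (fun u => ψ u ℓ₁ / Ψ u ℓ₁) atTop (nhds C))
    (R : ℝ → ℝ) (hR : ∀ ℓ ∈ Set.Ico 0 ℓ₁, R₁ < R ℓ)
    (hLundberg : ∀ u, 0 ≤ u → ∀ ℓ ∈ Set.Ico 0 ℓ₁, Ψ u ℓ ≤ Real.exp (-(R ℓ) * u)) :
    Tendsto (fun u => (∫ ℓ, ψ u ℓ ∂G) / (p₁ * C * c₁ * Real.exp (-R₁ * u))) atTop (nhds 1) ∧
    Tendsto (fun u => (∫ ℓ, Ψ u ℓ ∂G) / (p₁ * c₁ * Real.exp (-R₁ * u))) atTop (nhds 1) ∧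
    Tendsto (fun u => (∫ ℓ, ψ u ℓ ∂G) / (∫ ℓ, Ψ u ℓ ∂G)) atTop (nhds C) :=
  endpoint_atom_asymptotics_general ℓ₁ G hGsupp p₁ hp₁def hp₁pos ψ Ψ hψmeas hΨmeas horder c₁ R₁ C
    hc₁ hC hΨ_asymp hratio R hR hLundberg
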